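/- Let S ⊆ ℝ^d have finite measure, and let Λ ⊆ ℝ^d be separated, relatively dense, and almost repetitive, meaning W(Γ) = W(Λ) for all Γ ∈ W(Λ), where W(Λ) is the set of weak limits of translates of Λ. If E(Λ) is a frame for L²(S) and there exists Γ ∈ W(Λ) such that E(Γ) is a Riesz basis for L²(S), then E(Λ) itself is a Riesz basis for L²(S). -/

import Mathlib

/-!
Riesz-sequence bounds of exponentials survive both operations that produce the hull. Translating
the frequencies by `x` multiplies every exponential by the unimodular `e_{-x}`, which leaves all
inner products `⟪e_λ, e_μ⟫` and hence the Riesz bounds unchanged. Passing to a weak limit keeps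
them too: `λ ↦ e_λ` is continuous into `L²(S)`, and finitely many distinct limit points are
approximated by distinct points of the translates. As `Λ` is separated it lies in its own hull, so
almost repetitivity gives `Λ ∈ W(Γ)`, and `E(Λ)` inherits the Riesz bounds of `E(Γ)`; completeness
of `E(Λ)` is forced by the lower frame bound.
-/

open MeasureTheory Filter Metric Complex
open scoped ENNReal InnerProductSpace ComplexConjugate

noncomputable section

abbrev Euc (d : ℕ) := EuclideanSpace ℝ (Fin d)

variable {d : ℕ}

/-- The exponential function `e_λ(t) = e^{2πi λ·t}`. -/
def expFn (l t : Euc d) : ℂ := Complex.exp (((2 * Real.pi * ⟪l, t⟫_ℝ : ℝ) : ℂ) * Complex.I)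

lemma expFn_continuous (l : Euc d) : Continuous (expFn l) :=
  Complex.continuous_exp.comp <|
    (Complex.continuous_ofReal.comp (continuous_const.mul (continuous_const.inner continuous_id))).mul
      continuous_const

lemma expFn_norm (l t : Euc d) : ‖expFn l t‖ = 1 := by
  rw [expFn, Complex.norm_exp_ofReal_mul_I]

lemma expFn_memLp (S : Set (Euc d)) (hS : volume S ≠ ⊤) (l : Euc d) :
    MemLp (expFn l) 2 (volume.restrict S) := by
  haveI : IsFiniteMeasure (volume.restrict S) :=
    ⟨by simpa [Measure.restrict_apply_univ] using lt_top_iff_ne_top.2 hS⟩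
  refine MemLp.of_bound ((expFn_continuous l).aestronglyMeasurable) 1 ?_
  filter_upwards with t using le_of_eq (expFn_norm l t)

/-- `e_λ` as an element of `L²(S)`. -/
def expLp (S : Set (Euc d)) (hS : volume S ≠ ⊤) (l : Euc d) :
    Lp ℂ 2 (volume.restrict S) := (expFn_memLp S hS l).toLp _

/-- Pointwise multiplication by `e_x` (modulation) as a map on `L²(S)`. -/
def modLp (S : Set (Euc d)) (_hS : volume S ≠ ⊤) (x : Euc d)
    (f : Lp ℂ 2 (volume.restrict S)) : Lp ℂ 2 (volume.restrict S) :=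
  MemLp.toLp (fun t => expFn x t * f t) <| by
    refine MemLp.of_le (Lp.memLp f)
      (((expFn_continuous x).aestronglyMeasurable).mul (Lp.aestronglyMeasurable f)) ?_
    filter_upwards with t using le_of_eq (by rw [norm_mul, expFn_norm, one_mul])

/-- The translate `Λ - x` of a point set. -/
def setTrans (Λ : Set (Euc d)) (x : Euc d) : Set (Euc d) := (fun l => l - x) '' Λ

/-- Weak convergence of point sets in Beurling's sense. -/
def WeakLim (Λn : ℕ → Set (Euc d)) (Γ : Set (Euc d)) : Prop :=
  (∀ γ ∈ Γ, ∃ u : ℕ → Euc d, (∀ n, u n ∈ Λn n) ∧ Tendsto u atTop (nhds γ)) ∧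
  (∀ φ : ℕ → ℕ, StrictMono φ → ∀ u : ℕ → Euc d, (∀ k, u k ∈ Λn (φ k)) →
    ∀ γ : Euc d, Tendsto u atTop (nhds γ) → γ ∈ Γ)

/-- `Γ` is a weak limit of translates of `Λ`. -/
def InHull (Λ Γ : Set (Euc d)) : Prop :=
  ∃ x : ℕ → Euc d, WeakLim (fun n => setTrans Λ (x n)) Γ

/-- `Λ` is separated. -/
def IsSeparated (Λ : Set (Euc d)) : Prop :=
  ∃ s > (0:ℝ), ∀ l ∈ Λ, ∀ m ∈ Λ, l ≠ m → s ≤ dist l m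

/-- The separation constant `Sep(Λ)`. -/
def sepConst (Λ : Set (Euc d)) : ℝ≥0∞ :=
  ⨅ (l : Λ) (m : Λ) (_ : (l : Euc d) ≠ (m : Euc d)), edist (l : Euc d) (m : Euc d)

/-- Upper Beurling density. -/
def upperDensity (Λ : Set (Euc d)) : ℝ≥0∞ :=
  Filter.limsup (fun r : ℝ =>
    ⨆ x : Euc d, ((Λ ∩ ball x r).ncard : ℝ≥0∞) / volume (ball (0 : Euc d) r)) atTop

/-- Lower Beurling density. -/
def lowerDensity (Λ : Set (Euc d)) : ℝ≥0∞ :=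
  Filter.liminf (fun r : ℝ =>
    ⨅ x : Euc d, ((Λ ∩ ball x r).ncard : ℝ≥0∞) / volume (ball (0 : Euc d) r)) atTop

/-- Frame inequalities for `E(Λ)` in `L²(S)`. -/
def IsFrame (S : Set (Euc d)) (hS : volume S ≠ ⊤) (Λ : Set (Euc d)) (A B : ℝ) : Prop :=
  ∀ f : Lp ℂ 2 (volume.restrict S),
    A * ‖f‖ ^ 2 ≤ ∑' l : Λ, ‖⟪expLp S hS (l : Euc d), f⟫_ℂ‖ ^ 2 ∧
    ∑' l : Λ, ‖⟪expLp S hS (l : Euc d), f⟫_ℂ‖ ^ 2 ≤ B * ‖f‖ ^ 2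

/-- Bessel inequality for `E(Λ)` in `L²(S)`. -/
def IsBessel (S : Set (Euc d)) (hS : volume S ≠ ⊤) (Λ : Set (Euc d)) (B : ℝ) : Prop :=
  ∀ f : Lp ℂ 2 (volume.restrict S),
    ∑' l : Λ, ‖⟪expLp S hS (l : Euc d), f⟫_ℂ‖ ^ 2 ≤ B * ‖f‖ ^ 2

/-- The frame operator `S_Λ`. -/
def frameOp (S : Set (Euc d)) (hS : volume S ≠ ⊤) (Λ : Set (Euc d))
    (f : Lp ℂ 2 (volume.restrict S)) : Lp ℂ 2 (volume.restrict S) :=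
  ∑' l : Λ, ⟪expLp S hS (l : Euc d), f⟫_ℂ • expLp S hS (l : Euc d)

/-- Riesz sequence inequalities for `E(Λ)` in `L²(S)`. -/
def IsRieszSeq (S : Set (Euc d)) (hS : volume S ≠ ⊤) (Λ : Set (Euc d)) (A B : ℝ) : Prop :=
  ∀ c : Λ →₀ ℂ,
    A * ∑ l ∈ c.support, ‖c l‖ ^ 2 ≤ ‖∑ l ∈ c.support, c l • expLp S hS (l : Euc d)‖ ^ 2 ∧
    ‖∑ l ∈ c.support, c l • expLp S hS (l : Euc d)‖ ^ 2 ≤ B * ∑ l ∈ c.support, ‖c l‖ ^ 2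

/-- Closed linear span of `E(Λ)` in `L²(S)`. -/
def spanExp (S : Set (Euc d)) (hS : volume S ≠ ⊤) (Λ : Set (Euc d)) :
    Submodule ℂ (Lp ℂ 2 (volume.restrict S)) :=
  (Submodule.span ℂ (expLp S hS '' Λ)).topologicalClosure

/-- Orthogonal projection onto the closed span of `E(Λ)`. -/
def projExp (S : Set (Euc d)) (hS : volume S ≠ ⊤) (Λ : Set (Euc d))
    (f : Lp ℂ 2 (volume.restrict S)) : Lp ℂ 2 (volume.restrict S) :=
  haveI : CompleteSpace (spanExp S hS Λ) :=
    (Submodule.isClosed_topologicalClosure _).completeSpace_coe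
  ((spanExp S hS Λ).orthogonalProjectionOnto f : Lp ℂ 2 (volume.restrict S))

/-- `E(Λ)` is a Riesz basis for `L²(S)`. -/
def IsRieszBasis (S : Set (Euc d)) (hS : volume S ≠ ⊤) (Λ : Set (Euc d)) : Prop :=
  (∃ A B : ℝ, 0 < A ∧ A ≤ B ∧ IsRieszSeq S hS Λ A B) ∧ spanExp S hS Λ = ⊤

lemma expFn_add (l m t : Euc d) : expFn (l + m) t = expFn l t * expFn m t := by
  rw [expFn, expFn, expFn, ← Complex.exp_add, inner_add_left]
  congr 1
  push_cast
  ring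

lemma expFn_comm (l t : Euc d) : expFn l t = expFn t l := by
  rw [expFn, expFn, real_inner_comm]

lemma inner_expLp_sub_sub (S : Set (Euc d)) (hS : volume S ≠ ⊤) (l m x : Euc d) :
    ⟪expLp S hS (l - x), expLp S hS (m - x)⟫_ℂ = ⟪expLp S hS l, expLp S hS m⟫_ℂ := by
  rw [L2.inner_def, L2.inner_def]
  refine integral_congr_ae ?_
  filter_upwards [(expFn_memLp S hS (l - x)).coeFn_toLp, (expFn_memLp S hS (m - x)).coeFn_toLp,
    (expFn_memLp S hS l).coeFn_toLp, (expFn_memLp S hS m).coeFn_toLp] with t h₁ h₂ h₃ h₄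
  simp only [expLp, RCLike.inner_apply]
  rw [h₁, h₂, h₃, h₄, sub_eq_add_neg, sub_eq_add_neg, expFn_add, expFn_add, map_mul]
  have hx : conj (expFn (-x) t) * expFn (-x) t = 1 := by
    rw [Complex.conj_mul', expFn_norm]; norm_num
  linear_combination (expFn m t * conj (expFn l t)) * hx

lemma norm_sum_smul_eq_of_inner_eq {𝕜 E ι : Type*} [RCLike 𝕜] [NormedAddCommGroup E]
    [InnerProductSpace 𝕜 E] (s : Finset ι) (a : ι → 𝕜) {f g : ι → E}
    (h : ∀ i j, ⟪f i, f j⟫_𝕜 = ⟪g i, g j⟫_𝕜) :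
    ‖∑ i ∈ s, a i • f i‖ = ‖∑ i ∈ s, a i • g i‖ := by
  have : ⟪∑ i ∈ s, a i • f i, ∑ i ∈ s, a i • f i⟫_𝕜 =
      ⟪∑ i ∈ s, a i • g i, ∑ i ∈ s, a i • g i⟫_𝕜 := by
    simp only [sum_inner, inner_sum, inner_smul_left, inner_smul_right, h]
  rw [inner_self_eq_norm_sq_to_K, inner_self_eq_norm_sq_to_K] at this
  exact_mod_cast (sq_eq_sq₀ (norm_nonneg _) (norm_nonneg _)).1 (by exact_mod_cast this)

lemma unifIntegrable_of_norm_le {α β ι : Type*} [MeasurableSpace α] [NormedAddCommGroup β]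
    {μ : Measure α} {p : ℝ≥0∞} (hp : 1 ≤ p) (hp' : p ≠ ⊤) {f : ι → α → β}
    (hf : ∀ i, AEStronglyMeasurable (f i) μ) (C : NNReal) (hC : ∀ i x, ‖f i x‖₊ ≤ C) :
    UnifIntegrable f p μ := by
  refine unifIntegrable_of hp hp' hf fun _ _ => ⟨C + 1, fun i => ?_⟩
  have : {x | C + 1 ≤ ‖f i x‖₊} = ∅ :=
    Set.eq_empty_of_forall_notMem fun x hx => (hC i x).not_gt ((lt_add_one C).trans_le hx)
  simp [this]

lemma tendsto_expLp (S : Set (Euc d)) (hS : volume S ≠ ⊤) {u : ℕ → Euc d} {l : Euc d}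
    (hu : Tendsto u atTop (nhds l)) :
    Tendsto (fun n => expLp S hS (u n)) atTop (nhds (expLp S hS l)) := by
  have : IsFiniteMeasure (volume.restrict S) := ⟨by simpa using hS.lt_top⟩
  refine (Lp.tendsto_Lp_iff_tendsto_eLpNorm'' _ _ _ _).2 <|
    tendsto_Lp_finite_of_tendsto_ae one_le_two ENNReal.ofNat_ne_top
      (fun _ => (expFn_continuous _).aestronglyMeasurable) (expFn_memLp S hS l)
      (unifIntegrable_of_norm_le one_le_two ENNReal.ofNat_ne_top
        (fun _ => (expFn_continuous _).aestronglyMeasurable) 1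
        fun _ t => by rw [← NNReal.coe_le_coe, coe_nnnorm, expFn_norm]; rfl)
      (ae_of_all _ fun t => ?_)
  simp only [expFn_comm _ t]
  exact ((expFn_continuous t).tendsto l).comp hu

section RieszFamily

variable (S : Set (Euc d)) (hS : volume S ≠ ⊤)

/- `IsRieszSeq` indexed by finite injective families of points instead of coefficients on `Λ`,
so that the points can be moved (translated, approximated) while the coefficients stay fixed. -/
def IsRieszSeqOnFamilies (Λ : Set (Euc d)) (A B : ℝ) : Prop :=
  ∀ (ι : Type) [Fintype ι] (v : ι → Euc d), Function.Injective v → (∀ i, v i ∈ Λ) →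
    ∀ a : ι → ℂ,
      A * ∑ i, ‖a i‖ ^ 2 ≤ ‖∑ i, a i • expLp S hS (v i)‖ ^ 2 ∧
      ‖∑ i, a i • expLp S hS (v i)‖ ^ 2 ≤ B * ∑ i, ‖a i‖ ^ 2

variable {S hS}

lemma isRieszSeq_iff_onFamilies {Λ : Set (Euc d)} {A B : ℝ} :
    IsRieszSeq S hS Λ A B ↔ IsRieszSeqOnFamilies S hS Λ A B := by
  constructor
  · intro h ι _ v hv hvΛ a
    let e : ι ↪ Λ := ⟨fun i => ⟨v i, hvΛ i⟩, fun i j hij => hv (congrArg Subtype.val hij)⟩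
    let c : Λ →₀ ℂ := (Finsupp.equivFunOnFinite.symm a).embDomain e
    have hcoeff : ∑ l ∈ c.support, ‖c l‖ ^ 2 = ∑ i, ‖a i‖ ^ 2 := by
      change c.sum (fun _ z => ‖z‖ ^ 2) = _
      rw [Finsupp.sum_embDomain, Finsupp.sum_fintype _ _ (by simp)]
      simp only [Finsupp.equivFunOnFinite_symm_apply_apply]
    have hvec : ∑ l ∈ c.support, c l • expLp S hS l = ∑ i, a i • expLp S hS (v i) := by
      change c.sum (fun l z => z • expLp S hS l) = _
      rw [Finsupp.sum_embDomain, Finsupp.sum_fintype _ _ (by simp)]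
      simp only [Finsupp.equivFunOnFinite_symm_apply_apply]
      rfl
    simpa only [hcoeff, hvec] using h c
  · intro h c
    simpa only [Finset.sum_coe_sort c.support (fun l => ‖c l‖ ^ 2),
      Finset.sum_coe_sort c.support (fun l => c l • expLp S hS l)] using
      h c.support (fun l => ((l : Λ) : Euc d)) (fun l m hlm => Subtype.ext (Subtype.ext hlm))
        (fun l => l.1.2) (fun l => c l)

lemma IsRieszSeqOnFamilies.setTrans {Γ : Set (Euc d)} {A B : ℝ}
    (h : IsRieszSeqOnFamilies S hS Γ A B) (x : Euc d) :
    IsRieszSeqOnFamilies S hS (setTrans Γ x) A B := by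
  intro ι _ v hv hvΓ a
  have hmem : ∀ i, v i + x ∈ Γ := fun i => by
    obtain ⟨γ, hγ, hγv⟩ := hvΓ i
    rwa [← hγv, sub_add_cancel]
  have hnorm : ‖∑ i, a i • expLp S hS (v i)‖ = ‖∑ i, a i • expLp S hS (v i + x)‖ :=
    norm_sum_smul_eq_of_inner_eq _ a fun i j => by
      simpa only [add_sub_cancel_right] using (inner_expLp_sub_sub S hS (v i + x) (v j + x) x)
  rw [hnorm]
  exact h ι (fun i => v i + x) (fun i j hij => hv (add_right_cancel hij)) hmem a

lemma eventually_injective_of_tendsto {ι α X : Type*} [Finite ι] [TopologicalSpace X]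
    [T2Space X] {l : Filter α} {u : ι → α → X} {v : ι → X} (hv : Function.Injective v)
    (hu : ∀ i, Tendsto (u i) l (nhds (v i))) :
    ∀ᶠ n in l, Function.Injective fun i => u i n := by
  have hpair : ∀ i j, ∀ᶠ n in l, i ≠ j → u i n ≠ u j n := fun i j => by
    by_cases hij : i = j
    · exact .of_forall fun _ h => absurd hij h
    · filter_upwards [((hu i).prodMk_nhds (hu j)).eventually
        ((isOpen_ne_fun continuous_fst continuous_snd).mem_nhds (hv.ne hij))] with n hn _ using hn
  filter_upwards [eventually_all.2 fun i => eventually_all.2 (hpair i)] with n hn i j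
  exact not_imp_not.1 (hn i j)

lemma IsRieszSeqOnFamilies.of_weakLim {Λn : ℕ → Set (Euc d)} {Γ : Set (Euc d)} {A B : ℝ}
    (h : ∀ n, IsRieszSeqOnFamilies S hS (Λn n) A B) (hlim : WeakLim Λn Γ) :
    IsRieszSeqOnFamilies S hS Γ A B := by
  intro ι _ v hv hvΓ a
  choose u hu_mem hu_lim using fun i => hlim.1 (v i) (hvΓ i)
  have hconv : Tendsto (fun n => ‖∑ i, a i • expLp S hS (u i n)‖ ^ 2) atTop
      (nhds (‖∑ i, a i • expLp S hS (v i)‖ ^ 2)) :=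
    ((tendsto_finsetSum _ fun i _ => (tendsto_expLp S hS (hu_lim i)).const_smul (a i)).norm).pow 2
  have hbounds := (eventually_injective_of_tendsto hv hu_lim).mono fun n hn =>
    h n ι (fun i => u i n) hn (fun i => hu_mem i n) a
  exact ⟨ge_of_tendsto hconv (hbounds.mono fun _ => And.left),
    le_of_tendsto hconv (hbounds.mono fun _ => And.right)⟩

end RieszFamily

lemma IsSeparated.isClosed {Λ : Set (Euc d)} (hsep : IsSeparated Λ) : IsClosed Λ := by
  obtain ⟨s, hs, hsep⟩ := hsep
  exact isClosed_of_pairwise_le_dist hs fun l hl m hm hlm => hsep l hl m hm hlm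

lemma inHull_self {Λ : Set (Euc d)} (hsep : IsSeparated Λ) : InHull Λ Λ := by
  have h₀ : setTrans Λ 0 = Λ := by simp [setTrans]
  refine ⟨fun _ => 0, fun γ hγ => ⟨fun _ => γ, fun _ => ?_, tendsto_const_nhds⟩,
    fun _ _ u hu γ hγ => hsep.isClosed.mem_of_tendsto hγ (Eventually.of_forall fun k => ?_)⟩
  · simpa only [h₀] using hγ
  · simpa only [h₀] using hu k

lemma spanExp_eq_top_of_isFrame (S : Set (Euc d)) (hS : volume S ≠ ⊤) {Λ : Set (Euc d)}
    {A B : ℝ} (hA : 0 < A) (hframe : IsFrame S hS Λ A B) : spanExp S hS Λ = ⊤ := by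
  rw [spanExp, Submodule.topologicalClosure_eq_top_iff, Submodule.eq_bot_iff]
  intro f hf
  have hcoeff : ∀ l : Λ, ⟪expLp S hS l, f⟫_ℂ = 0 := fun l =>
    (Submodule.mem_orthogonal _ f).1 hf _ (Submodule.subset_span ⟨l, l.2, rfl⟩)
  have := (hframe f).1
  simp only [hcoeff, norm_zero, zero_pow two_ne_zero, tsum_zero] at this
  by_contra hf₀
  exact this.not_gt (mul_pos hA (pow_pos (norm_pos_iff.2 hf₀) 2))

theorem stmt18_general {d : ℕ} (S : Set (Euc d)) (hS : volume S ≠ ⊤) (Λ : Set (Euc d))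
    (hsep : IsSeparated Λ)
    (hrep : ∀ Γ : Set (Euc d), InHull Λ Γ → ∀ Δ : Set (Euc d), (InHull Γ Δ ↔ InHull Λ Δ))
    (hframe : ∃ A B : ℝ, 0 < A ∧ A ≤ B ∧ IsFrame S hS Λ A B)
    (hΓ : ∃ Γ : Set (Euc d), InHull Λ Γ ∧ IsRieszBasis S hS Γ) :
    IsRieszBasis S hS Λ := by
  obtain ⟨A', B', hA', -, hΛframe⟩ := hframe
  obtain ⟨Γ, hΛΓ, ⟨A, B, hA, hAB, hΓriesz⟩, -⟩ := hΓ
  obtain ⟨x, hΓΛ⟩ : InHull Γ Λ := (hrep Γ hΛΓ Λ).2 (inHull_self hsep)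
  have hΓfam := isRieszSeq_iff_onFamilies.1 hΓriesz
  have hΛfam := IsRieszSeqOnFamilies.of_weakLim (fun n => hΓfam.setTrans (x n)) hΓΛ
  exact ⟨⟨A, B, hA, hAB, isRieszSeq_iff_onFamilies.2 hΛfam⟩,
    spanExp_eq_top_of_isFrame S hS hA' hΛframe⟩

theorem stmt18 {d : ℕ} (S : Set (Euc d)) (hS : volume S ≠ ⊤) (Λ : Set (Euc d))
    (hsep : IsSeparated Λ)
    (hrd : ∃ R > (0 : ℝ), ∀ x : Euc d, ∃ l ∈ Λ, dist x l < R)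
    (hrep : ∀ Γ : Set (Euc d), InHull Λ Γ → ∀ Δ : Set (Euc d), (InHull Γ Δ ↔ InHull Λ Δ))
    (hframe : ∃ A B : ℝ, 0 < A ∧ A ≤ B ∧ IsFrame S hS Λ A B)
    (hΓ : ∃ Γ : Set (Euc d), InHull Λ Γ ∧ IsRieszBasis S hS Γ) :
    IsRieszBasis S hS Λ :=
  stmt18_general S hS Λ hsep hrep hframe hΓ

end
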